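/- Let K = k(ξ,η,θ,ι) with k a field of characteristic 2, and set F = z^2 + x^3 + (ξ*x + η*y + θ*z + ι)*y^4 ∈ K[x,y,z]. Then the Tjurina ideal (∂F/∂x, ∂F/∂y, ∂F/∂z, F) equals (x^2, y^4, z^2) in K[x,y,z], and the Tjurina algebra K[x,y,z]/(x^2, y^4, z^2) has K-dimension 16. -/

import Mathlib

open MvPolynomial

/-! In characteristic 2 the partial derivatives of `F` are `x^2 + ξ*y^4`, `η*y^4` and `θ*y^4`.
As `η` is a unit they yield `y^4`, hence `x^2`, and then `F` yields `z^2`. The quotient by the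
monomial ideal `(x^2, y^4, z^2)` is spanned freely by the monomials outside it, the
`x^i*y^j*z^l` with `i < 2`, `j < 4`, `l < 2`. -/

namespace MvPolynomial

variable {σ R : Type*} [CommRing R]

theorem isCompl_restrictSupport_compl (s : Set (σ →₀ ℕ)) :
    IsCompl (restrictSupport R s) (restrictSupport R sᶜ) := by
  constructor
  · rw [Submodule.disjoint_def]
    intro p hs hsc
    rw [mem_restrictSupport_iff] at hs hsc
    rw [← support_eq_empty, ← Finset.coe_eq_empty]
    exact Set.eq_empty_of_subset_empty fun d hd => hsc hd (hs hd)
  · rw [codisjoint_iff, restrictSupport_eq_span, restrictSupport_eq_span, ← Submodule.span_union,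
      ← Set.image_union, Set.union_compl_self, ← restrictSupport_eq_span, restrictSupport_univ]

theorem restrictScalars_span_X_pow (n : σ → ℕ) :
    (Ideal.span (Set.range fun i => X i ^ n i) : Ideal (MvPolynomial σ R)).restrictScalars R =
      restrictSupport R {d | ∃ i, n i ≤ d i} := by
  ext p
  have : (Set.range fun i => (X i ^ n i : MvPolynomial σ R)) =
      (fun d => monomial d (1 : R)) '' Set.range fun i => Finsupp.single i (n i) := by
    rw [← Set.range_comp]; simp only [Function.comp_def, X_pow_eq_monomial]
  rw [Submodule.restrictScalars_mem, this, mem_ideal_span_monomial_image, mem_restrictSupport_iff]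
  simp [Set.subset_def, Finsupp.single_le_iff]

theorem Finsupp.natCard_setOf_forall_lt [Fintype σ] (n : σ → ℕ) :
    Nat.card {d : σ →₀ ℕ | ∀ i, d i < n i} = ∏ i, n i := by
  let e : {d : σ →₀ ℕ | ∀ i, d i < n i} ≃ ∀ i, Fin (n i) :=
    (Finsupp.equivFunOnFinite.subtypeEquiv fun _ => Iff.rfl).trans
      ((Equiv.subtypePiEquivPi).trans (Equiv.piCongrRight fun i => (Fin.equivSubtype).symm))
  rw [Nat.card_congr e, Nat.card_pi]
  simp

theorem finrank_quotient_span_X_pow [Nontrivial R] [Fintype σ] (n : σ → ℕ) :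
    Module.finrank R (MvPolynomial σ R ⧸ Ideal.span (Set.range fun i => (X i ^ n i : MvPolynomial σ R))) =
      ∏ i, n i := by
  have hcompl : {d : σ →₀ ℕ | ∃ i, n i ≤ d i}ᶜ = {d | ∀ i, d i < n i} := by
    ext d; simp
  have hI := isCompl_restrictSupport_compl (R := R) {d : σ →₀ ℕ | ∃ i, n i ≤ d i}
  rw [hcompl, ← restrictScalars_span_X_pow] at hI
  rw [← (Submodule.Quotient.restrictScalarsEquiv R _).finrank_eq,
    (Submodule.quotientEquivOfIsCompl _ _ hI).finrank_eq,
    Module.finrank_eq_nat_card_basis (basisRestrictSupport R _), Finsupp.natCard_setOf_forall_lt]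

end MvPolynomial

/-- The `E_8^0 F_4` singularity `z^2 + x^3 + w*y^4` restricted to the hyperplane
`w = a*x + b*y + c*z + d`. -/
noncomputable def e8F4Section {R : Type*} [CommSemiring R] (a b c d : R) :
    MvPolynomial (Fin 3) R :=
  X 2 ^ 2 + X 0 ^ 3 + (C a * X 0 + C b * X 1 + C c * X 2 + C d) * X 1 ^ 4

section CharTwo

variable {R : Type*} [CommRing R] [CharP R 2] (a b c d : R)

theorem pderiv_zero_e8F4Section : pderiv 0 (e8F4Section a b c d) = X 0 ^ 2 + C a * X 1 ^ 4 := by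
  simp only [e8F4Section, map_add, Derivation.leibniz, Derivation.leibniz_pow, derivation_C,
    pderiv_X, Pi.single_apply, Fin.reduceEq, reduceIte, smul_eq_mul, nsmul_eq_mul]
  linear_combination X 0 ^ 2 * CharTwo.two_eq_zero (R := MvPolynomial (Fin 3) R)

theorem pderiv_one_e8F4Section : pderiv 1 (e8F4Section a b c d) = C b * X 1 ^ 4 := by
  simp only [e8F4Section, map_add, Derivation.leibniz, Derivation.leibniz_pow, derivation_C,
    pderiv_X, Pi.single_apply, Fin.reduceEq, reduceIte, smul_eq_mul, nsmul_eq_mul]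
  linear_combination 2 * (C a * X 0 + C b * X 1 + C c * X 2 + C d) * X 1 ^ 3 *
    CharTwo.two_eq_zero (R := MvPolynomial (Fin 3) R)

theorem pderiv_two_e8F4Section : pderiv 2 (e8F4Section a b c d) = C c * X 1 ^ 4 := by
  simp only [e8F4Section, map_add, Derivation.leibniz, Derivation.leibniz_pow, derivation_C,
    pderiv_X, Pi.single_apply, Fin.reduceEq, reduceIte, smul_eq_mul, nsmul_eq_mul]
  linear_combination X 2 * CharTwo.two_eq_zero (R := MvPolynomial (Fin 3) R)

theorem span_pderiv_e8F4Section (hb : IsUnit b) :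
    Ideal.span {pderiv 0 (e8F4Section a b c d), pderiv 1 (e8F4Section a b c d),
      pderiv 2 (e8F4Section a b c d), e8F4Section a b c d} =
      Ideal.span {X 0 ^ 2, X 1 ^ 4, X 2 ^ 2} := by
  set L : MvPolynomial (Fin 3) R := C a * X 0 + C b * X 1 + C c * X 2 + C d
  have hF : e8F4Section a b c d = X 2 ^ 2 + X 0 * X 0 ^ 2 + L * X 1 ^ 4 := by
    rw [e8F4Section]; ring
  rw [pderiv_zero_e8F4Section, pderiv_one_e8F4Section, pderiv_two_e8F4Section, hF]
  apply le_antisymm <;> rw [Ideal.span_le]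
  · set J : Ideal (MvPolynomial (Fin 3) R) := Ideal.span {X 0 ^ 2, X 1 ^ 4, X 2 ^ 2}
    have hx : X 0 ^ 2 ∈ J := Ideal.subset_span (by simp)
    have hy : X 1 ^ 4 ∈ J := Ideal.subset_span (by simp)
    have hz : X 2 ^ 2 ∈ J := Ideal.subset_span (by simp)
    rintro p (rfl | rfl | rfl | rfl)
    · exact add_mem hx (J.mul_mem_left _ hy)
    · exact J.mul_mem_left _ hy
    · exact J.mul_mem_left _ hy
    · exact add_mem (add_mem hz (J.mul_mem_left _ hx)) (J.mul_mem_left _ hy)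
  · set S : Ideal (MvPolynomial (Fin 3) R) := Ideal.span {X 0 ^ 2 + C a * X 1 ^ 4, C b * X 1 ^ 4,
      C c * X 1 ^ 4, X 2 ^ 2 + X 0 * X 0 ^ 2 + L * X 1 ^ 4}
    have hy : X 1 ^ 4 ∈ S :=
      (Ideal.unit_mul_mem_iff_mem S (hb.map C)).mp (Ideal.subset_span (by simp))
    have hx : X 0 ^ 2 ∈ S :=
      (S.add_mem_iff_left (S.mul_mem_left (C a) hy)).mp (Ideal.subset_span (by simp))
    have hz : X 2 ^ 2 ∈ S :=
      (S.add_mem_iff_left (S.mul_mem_left (X 0) hx)).mp <|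
        (S.add_mem_iff_left (S.mul_mem_left L hy)).mp (Ideal.subset_span (by simp))
    rintro p (rfl | rfl | rfl)
    · exact hx
    · exact hy
    · exact hz
end CharTwo

theorem stmt_15_general (k : Type*) [Field k] [CharP k 2]
    (K : Type*)
    [Field K] [Algebra (MvPolynomial (Fin 4) k) K] [IsFractionRing (MvPolynomial (Fin 4) k) K]
    (ξ η θ ι : K)
    (hη : η = algebraMap (MvPolynomial (Fin 4) k) K (X 1))
    (F : MvPolynomial (Fin 3) K)
    (hF : F = X 2 ^ 2 + X 0 ^ 3 + (C ξ * X 0 + C η * X 1 + C θ * X 2 + C ι) * X 1 ^ 4) :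
    Ideal.span {pderiv 0 F, pderiv 1 F, pderiv 2 F, F} =
      Ideal.span {(X 0 ^ 2 : MvPolynomial (Fin 3) K), X 1 ^ 4, X 2 ^ 2} ∧
    Module.finrank K
      (MvPolynomial (Fin 3) K ⧸
        Ideal.span {(X 0 ^ 2 : MvPolynomial (Fin 3) K), X 1 ^ 4, X 2 ^ 2}) = 16 := by
  have hinj := IsFractionRing.injective (MvPolynomial (Fin 4) k) K
  have : CharP K 2 := charP_of_injective_algebraMap hinj 2
  have hη_unit : IsUnit η := by
    rw [hη, isUnit_iff_ne_zero, map_ne_zero_iff _ hinj]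
    exact X_ne_zero 1
  have hspan : Ideal.span {(X 0 ^ 2 : MvPolynomial (Fin 3) K), X 1 ^ 4, X 2 ^ 2} =
      Ideal.span (Set.range fun i => X i ^ ![2, 4, 2] i) := by
    congr 1
    simp [Set.ext_iff, Fin.exists_fin_succ, eq_comm]
  subst hF
  refine ⟨span_pderiv_e8F4Section ξ η θ ι hη_unit, ?_⟩
  rw [hspan, finrank_quotient_span_X_pow]
  decide

/-- Generic hyperplane section of type `E_8^0 F_4`: over `K = k(ξ,η,θ,ι)`, for
`F = z^2 + x^3 + (ξ*x + η*y + θ*z + ι)*y^4`, the Tjurina ideal equals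
`(x^2, y^4, z^2)` and the Tjurina algebra has `K`-dimension 16. -/
theorem stmt_15 (k : Type*) [Field k] [CharP k 2]
    (K : Type*)
    [Field K] [Algebra (MvPolynomial (Fin 4) k) K] [IsFractionRing (MvPolynomial (Fin 4) k) K]
    (ξ η θ ι : K)
    (hξ : ξ = algebraMap (MvPolynomial (Fin 4) k) K (X 0))
    (hη : η = algebraMap (MvPolynomial (Fin 4) k) K (X 1))
    (hθ : θ = algebraMap (MvPolynomial (Fin 4) k) K (X 2))
    (hι : ι = algebraMap (MvPolynomial (Fin 4) k) K (X 3))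
    (F : MvPolynomial (Fin 3) K)
    (hF : F = X 2 ^ 2 + X 0 ^ 3 + (C ξ * X 0 + C η * X 1 + C θ * X 2 + C ι) * X 1 ^ 4) :
    Ideal.span {pderiv 0 F, pderiv 1 F, pderiv 2 F, F} =
      Ideal.span {(X 0 ^ 2 : MvPolynomial (Fin 3) K), X 1 ^ 4, X 2 ^ 2} ∧
    Module.finrank K
      (MvPolynomial (Fin 3) K ⧸
        Ideal.span {(X 0 ^ 2 : MvPolynomial (Fin 3) K), X 1 ^ 4, X 2 ^ 2}) = 16 :=
  stmt_15_general k K ξ η θ ι hη F hF
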